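/- Let p be an odd integer. Then for every integer j, the odd partial Kummer sum for q = 8, namely Σ_{ν odd, 0 ≤ ν ≤ 15} ζ_{16}^{jν − pν³}, vanishes if and only if j is even or j ≡ 2 − p (mod 4). Equivalently, 𝔓(p/8) = { j ∈ [0,15] ∩ ℤ : (j ≡ 0 mod 2) ∪ (j ≡ 2 − p mod 4) }. -/
import Mathlib


/-- ζ_m = exp(2πi/m), the primitive m-th root of unity. -/
noncomputable def zeta (m : ℕ) : ℂ := Complex.exp (2 * Real.pi * Complex.I / (m : ℂ))

/-- For an odd integer p and every integer j, the odd partial Kummer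
sum for q = 8, namely Σ_{ν odd, 0 ≤ ν ≤ 15} ζ_{16}^{jν − pν³}, vanishes if and only
if j is even or j ≡ 2 − p (mod 4). -/
theorem points_of_constancy_q_eight (p : ℤ) (hp : Odd p) (j : ℤ) :
    (∑ ν ∈ (Finset.range 16).filter (fun ν => Odd ν),
        zeta 16 ^ (j * (ν : ℤ) - p * (ν : ℤ) ^ 3)) = 0 ↔
    (Even j ∨ j ≡ 2 - p [ZMOD 4]) := by
  set ζ : ℂ := zeta 16 with hζ
  have hprim : IsPrimitiveRoot ζ 16 := by
    simpa [hζ, zeta] using Complex.isPrimitiveRoot_exp 16 (by norm_num)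
  have hζ0 : ζ ≠ 0 := hprim.ne_zero (by norm_num)
  have hone : ∀ m : ℤ, ζ ^ m = 1 ↔ (16:ℤ) ∣ m := fun m => hprim.zpow_eq_one_iff_dvd m
  have h8 : ζ ^ (8:ℤ) = -1 := by
    rw [hζ, zeta, show (8:ℤ) = ((8:ℕ):ℤ) by norm_num, zpow_natCast, ← Complex.exp_nat_mul,
      show (8:ℕ) * (2 * (Real.pi:ℂ) * Complex.I / ((16:ℕ):ℂ)) = Real.pi * Complex.I by
        push_cast; ring, Complex.exp_pi_mul_I]
  have hneg : ∀ m : ℤ, ζ ^ m = -1 ↔ (16:ℤ) ∣ (m - 8) := by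
    intro m
    rw [show m = (m - 8) + 8 by ring, zpow_add₀ hζ0, h8, mul_neg_one, neg_eq_iff_eq_neg,
      neg_neg, hone]
    ring_nf
  have hred : ∀ a b : ℤ, (16:ℤ) ∣ (a - b) → ζ ^ a = ζ ^ b := by
    intro a b ⟨k, hk⟩
    have ha : a = b + 16 * k := by omega
    rw [ha, zpow_add₀ hζ0, zpow_mul, (hone 16).mpr ⟨1, by ring⟩, one_zpow, mul_one]
  have hfs : (Finset.range 16).filter (fun ν => Odd ν) =
      ({1,3,5,7,9,11,13,15} : Finset ℕ) := by decide
  rw [hfs]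
  rw [Finset.sum_insert (by decide), Finset.sum_insert (by decide),
    Finset.sum_insert (by decide), Finset.sum_insert (by decide),
    Finset.sum_insert (by decide), Finset.sum_insert (by decide),
    Finset.sum_insert (by decide), Finset.sum_singleton]
  push_cast
  norm_num
  have e7 : ζ ^ (j * 7 - p * 343) = ζ ^ ((j - p) + ((2*j - 26*p) + (4*j - 124*p))) :=
    hred _ _ ⟨-12 * p, by ring⟩
  have e11 : ζ ^ (j * 11 - p * 1331) = ζ ^ ((j - p) + ((2*j - 26*p) + (8*j - 728*p))) :=
    hred _ _ ⟨-36 * p, by ring⟩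
  have e13 : ζ ^ (j * 13 - p * 2197) = ζ ^ ((j - p) + ((4*j - 124*p) + (8*j - 728*p))) :=
    hred _ _ ⟨-84 * p, by ring⟩
  have e15 : ζ ^ (j * 15 - p * 3375) =
      ζ ^ ((j - p) + ((2*j - 26*p) + ((4*j - 124*p) + (8*j - 728*p)))) :=
    hred _ _ ⟨-156 * p, by ring⟩
  have e3 : ζ ^ (j * 3 - p * 27) = ζ ^ ((j - p) + (2*j - 26*p)) := by congr 1; ring
  have e5 : ζ ^ (j * 5 - p * 125) = ζ ^ ((j - p) + (4*j - 124*p)) := by congr 1; ring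
  have e9 : ζ ^ (j * 9 - p * 729) = ζ ^ ((j - p) + (8*j - 728*p)) := by congr 1; ring
  rw [e3, e5, e7, e9, e11, e13, e15]
  simp only [zpow_add₀ hζ0]
  have hfact :
      ζ ^ (j - p) + (ζ ^ (j-p) * ζ ^ (2*j-26*p) + (ζ ^ (j-p) * ζ ^ (4*j-124*p) +
        (ζ ^ (j-p) * (ζ ^ (2*j-26*p) * ζ ^ (4*j-124*p)) + (ζ ^ (j-p) * ζ ^ (8*j-728*p) +
        (ζ ^ (j-p) * (ζ ^ (2*j-26*p) * ζ ^ (8*j-728*p)) +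
        (ζ ^ (j-p) * (ζ ^ (4*j-124*p) * ζ ^ (8*j-728*p)) +
        ζ ^ (j-p) * (ζ ^ (2*j-26*p) * (ζ ^ (4*j-124*p) * ζ ^ (8*j-728*p))))))))) =
      ζ ^ (j - p) * ((1 + ζ ^ (2*j-26*p)) * ((1 + ζ ^ (4*j-124*p)) * (1 + ζ ^ (8*j-728*p)))) := by
    ring
  rw [hfact]
  rw [mul_eq_zero, mul_eq_zero, mul_eq_zero]
  have hz : ¬ ζ ^ (j - p) = 0 := zpow_ne_zero _ hζ0
  have key : ∀ a : ℤ, (1 + ζ ^ a = 0) ↔ (16:ℤ) ∣ (a - 8) := by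
    intro a
    rw [add_comm, add_eq_zero_iff_eq_neg, hneg]
  simp only [hz, false_or, key]
  rw [Int.modEq_iff_dvd, even_iff_two_dvd]
  obtain ⟨k, hk⟩ := hp
  subst hk
  omega
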